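/- arXiv:1601.02109 — 2 statements merged into one kernel-verified Lean document; each statement's English description precedes it below -/
import Mathlib

section
/- Let M be an s×s matrix over 𝔽₂ and let i ≠ j be two row indices. Let x_i and x_j be the number of ones in rows i and j respectively, and let z = |{k : M(i,k) = M(j,k) = 1}|. Then the number of pairs of column indices k < l such that the 2×2 submatrix of M on rows i,j and columns k,l is invertible over 𝔽₂ equals x_i·x_j − z². -/
open scoped Classical

noncomputable section

/-- The 2×2 submatrix of `M` on rows `i, j` and columns `k, l`. -/
def sub2 {s : ℕ} (M : Matrix (Fin s) (Fin s) (ZMod 2)) (i j k l : Fin s) :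
    Matrix (Fin 2) (Fin 2) (ZMod 2) := !![M i k, M i l; M j k, M j l]

/-! Over 𝔽₂ the submatrix on columns `k, l` has determinant `M i k * M j l + M i l * M j k`, so it is
invertible exactly when `(k, l)` lies in the symmetric difference of `A × B` and `B × A`, where `A`
and `B` are the supports of rows `i` and `j`. Since `(A × B) ∩ (B × A) = (A ∩ B) × (A ∩ B)`, that
symmetric difference has `2 (|A| |B| - |A ∩ B|²)` elements; it is closed under swapping the
coordinates and misses the diagonal, so exactly half of its elements have `k < l`. -/

open Finset
open scoped symmDiff

namespace Finset

variable {α : Type*}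

theorem card_filter_fst_lt_mul_two [LinearOrder α] {T : Finset (α × α)}
    (hswap : ∀ q ∈ T, q.swap ∈ T) (hdiag : ∀ a, (a, a) ∉ T) :
    #(T.filter fun q => q.1 < q.2) * 2 = #T := by
  have hswap_card : #(T.filter fun q => ¬q.1 < q.2) = #(T.filter fun q => q.1 < q.2) := by
    refine card_nbij' Prod.swap Prod.swap ?_ ?_ (fun q _ => q.swap_swap) (fun q _ => q.swap_swap)
    · rintro ⟨a, b⟩ hq
      simp only [coe_filter, Set.mem_ofPred_eq, Prod.swap_prod_mk] at hq ⊢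
      refine ⟨hswap _ hq.1, lt_of_le_of_ne (not_lt.mp hq.2) ?_⟩
      rintro rfl
      exact hdiag b hq.1
    · intro q hq
      simp only [coe_filter, Set.mem_ofPred_eq] at hq ⊢
      exact ⟨hswap q hq.1, not_lt.mpr hq.2.le⟩
  rw [mul_two]
  nth_rw 2 [← hswap_card]
  exact card_filter_add_card_filter_not _

section DecidableEq

variable [DecidableEq α]

theorem card_symmDiff_add_two_mul_card_inter (s t : Finset α) :
    #(s ∆ t) + 2 * #(s ∩ t) = #s + #t := by
  rw [symmDiff_def, sup_eq_union, card_union_of_disjoint disjoint_sdiff_sdiff,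
    ← card_sdiff_add_card_inter s t, ← card_sdiff_add_card_inter t s, inter_comm t s]
  ring

theorem swap_mem_symmDiff_product_comm {s t : Finset α} {q : α × α} :
    q.swap ∈ (s ×ˢ t) ∆ (t ×ˢ s) ↔ q ∈ (s ×ˢ t) ∆ (t ×ˢ s) := by
  simp only [mem_symmDiff, mem_product, Prod.fst_swap, Prod.snd_swap]
  tauto

theorem mk_self_notMem_symmDiff_product_comm (s t : Finset α) (a : α) :
    (a, a) ∉ (s ×ˢ t) ∆ (t ×ˢ s) := by
  simp only [mem_symmDiff, mem_product]
  tauto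

end DecidableEq

theorem card_filter_fst_lt_symmDiff_product_comm_add_sq [LinearOrder α] (s t : Finset α) :
    #(((s ×ˢ t) ∆ (t ×ˢ s)).filter fun q => q.1 < q.2) + #(s ∩ t) ^ 2 = #s * #t := by
  have hhalf := card_filter_fst_lt_mul_two (T := (s ×ˢ t) ∆ (t ×ˢ s))
    (fun q hq => swap_mem_symmDiff_product_comm.mpr hq)
    (mk_self_notMem_symmDiff_product_comm s t)
  have hsymm := card_symmDiff_add_two_mul_card_inter (s ×ˢ t) (t ×ˢ s)
  rw [product_inter_product, inter_comm t s, card_product, card_product, card_product] at hsymm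
  linarith

end Finset

theorem ZMod.isUnit_matrix_fin_two_iff (a b c d : ZMod 2) :
    IsUnit !![a, b; c, d] ↔ Xor (a = 1 ∧ d = 1) (b = 1 ∧ c = 1) := by
  rw [Matrix.isUnit_iff_isUnit_det, Matrix.det_fin_two_of, isUnit_iff_ne_zero]
  revert a b c d
  unfold Xor
  decide

def rowOnes {m n : Type*} [Fintype n] (M : Matrix m n (ZMod 2)) (i : m) : Finset n :=
  {k | M i k = 1}

theorem isUnit_sub2_iff {s : ℕ} (M : Matrix (Fin s) (Fin s) (ZMod 2)) (i j k l : Fin s) :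
    IsUnit (sub2 M i j k l) ↔
      (k, l) ∈ (rowOnes M i ×ˢ rowOnes M j) ∆ (rowOnes M j ×ˢ rowOnes M i) := by
  simp only [sub2, ZMod.isUnit_matrix_fin_two_iff, mem_symmDiff, mem_product, rowOnes,
    mem_filter_univ, Xor]
  tauto

theorem pair_count_eq_general (s : ℕ) (M : Matrix (Fin s) (Fin s) (ZMod 2)) (i j : Fin s)
    (xi xj z : ℕ)
    (hxi : xi = (Finset.univ.filter (fun k : Fin s => M i k = 1)).card)
    (hxj : xj = (Finset.univ.filter (fun k : Fin s => M j k = 1)).card)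
    (hz : z = (Finset.univ.filter (fun k : Fin s => M i k = 1 ∧ M j k = 1)).card) :
    (((Finset.univ.filter (fun q : Fin s × Fin s =>
        q.1 < q.2 ∧ IsUnit (sub2 M i j q.1 q.2))).card : ℤ)) =
      (xi : ℤ) * (xj : ℤ) - (z : ℤ) ^ 2 := by
  have hpairs : (univ.filter fun q : Fin s × Fin s => q.1 < q.2 ∧ IsUnit (sub2 M i j q.1 q.2)) =
      ((rowOnes M i ×ˢ rowOnes M j) ∆ (rowOnes M j ×ˢ rowOnes M i)).filter fun q => q.1 < q.2 := by
    ext q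
    simp only [mem_filter, mem_univ, true_and, isUnit_sub2_iff, and_comm, Prod.mk.eta]
  have hcount := card_filter_fst_lt_symmDiff_product_comm_add_sq (rowOnes M i) (rowOnes M j)
  rw [← hpairs, rowOnes, rowOnes, ← filter_and] at hcount
  subst hxi hxj hz
  rw [eq_sub_iff_add_eq]
  exact_mod_cast hcount

theorem pair_count_eq (s : ℕ) (M : Matrix (Fin s) (Fin s) (ZMod 2)) (i j : Fin s)
    (hij : i ≠ j)
    (xi xj z : ℕ)
    (hxi : xi = (Finset.univ.filter (fun k : Fin s => M i k = 1)).card)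
    (hxj : xj = (Finset.univ.filter (fun k : Fin s => M j k = 1)).card)
    (hz : z = (Finset.univ.filter (fun k : Fin s => M i k = 1 ∧ M j k = 1)).card) :
    (((Finset.univ.filter (fun q : Fin s × Fin s =>
        q.1 < q.2 ∧ IsUnit (sub2 M i j q.1 q.2))).card : ℤ)) =
      (xi : ℤ) * (xj : ℤ) - (z : ℤ) ^ 2 :=
  pair_count_eq_general s M i j xi xj z hxi hxj hz
end
end

section
/- Let s ≥ 2 and let M be an s×s matrix over 𝔽₂ containing exactly c ones, where s ≤ c ≤ s². Then, as an inequality of real numbers, N₂(M) ≤ C(s,2)·( c²/s² − c²(c−s)²/(s⁴(s−1)²) ), where C(s,2) = s(s−1)/2. -/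
open scoped Classical

noncomputable section

/-- `N2 M` is the number of invertible 2×2 submatrices of `M`, i.e. the number of
quadruples `(i, j, k, l)` with `i < j`, `k < l` such that the 2×2 submatrix of `M`
on rows `i, j` and columns `k, l` is invertible over `𝔽₂`. -/
def N2 {s : ℕ} (M : Matrix (Fin s) (Fin s) (ZMod 2)) : ℕ :=
  (Finset.univ.filter (fun q : Fin s × Fin s × Fin s × Fin s =>
    q.1 < q.2.1 ∧ q.2.2.1 < q.2.2.2 ∧ IsUnit (sub2 M q.1 q.2.1 q.2.2.1 q.2.2.2))).card

/-!
Replace `M` by its real 0/1 matrix `A` with rows `r_i`, and let `c = ∑ A`. On 0/1 entries the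
indicator that the minor on rows `i, j` and columns `k, l` is odd is the polynomial
`A i k A j l + A i l A j k - 2 A i k A i l A j k A j l`; summing it over all quadruples gives
`4 N₂(M) = 2c² - 2 ∑_{i,j} ⟨r_i, r_j⟩²`. It remains to bound `∑ ⟨r_i, r_j⟩²` from below by
Cauchy–Schwarz, separately on the diagonal (where `⟨r_i, r_i⟩ = |r_i|` and `∑ |r_i| = c`) and off
the diagonal, where `∑_{i,j} ⟨r_i, r_j⟩` is the sum of the squared column sums, at least `c²/s`.
-/

open Finset Matrix

section Indicator

variable {ι κ R : Type*} [CommRing R]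

/-- On 0/1 entries this is `1` exactly when one of `a i k * a j l` and `a i l * a j k` is `1`
and the other `0`, i.e. when the minor on rows `i, j` and columns `k, l` is odd. -/
def minorIndicator (a : ι → κ → R) (i j : ι) (k l : κ) : R :=
  a i k * a j l + a i l * a j k - 2 * (a i k * a i l * (a j k * a j l))

variable (a : ι → κ → R)

lemma minorIndicator_swap_rows (i j : ι) (k l : κ) :
    minorIndicator a j i k l = minorIndicator a i j k l := by
  unfold minorIndicator; ring

lemma minorIndicator_swap_cols (i j : ι) (k l : κ) :
    minorIndicator a i j l k = minorIndicator a i j k l := by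
  unfold minorIndicator; ring

variable {a}

lemma minorIndicator_self_rows (ha : ∀ i k, IsIdempotentElem (a i k)) (i : ι) (k l : κ) :
    minorIndicator a i i k l = 0 := by
  unfold minorIndicator
  linear_combination -2 * ((ha i k).mul (ha i l)).eq

lemma minorIndicator_self_cols (ha : ∀ i k, IsIdempotentElem (a i k)) (i j : ι) (k : κ) :
    minorIndicator a i j k k = 0 := by
  unfold minorIndicator
  linear_combination -2 * ((ha i k).mul (ha j k)).eq

variable (a) [Fintype ι] [Fintype κ]

theorem sum_minorIndicator :
    ∑ i, ∑ j, ∑ k, ∑ l, minorIndicator a i j k l =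
      2 * (∑ i, ∑ k, a i k) ^ 2 - 2 * ∑ i, ∑ j, (a i ⬝ᵥ a j) ^ 2 := by
  have h₁ : ∑ i, ∑ j, ∑ k, ∑ l, a i k * a j l = (∑ i, ∑ k, a i k) ^ 2 := by
    simp_rw [sq, sum_mul_sum]
  have h₂ : ∑ i, ∑ j, ∑ k, ∑ l, a i l * a j k = (∑ i, ∑ k, a i k) ^ 2 := by
    rw [← h₁]
    exact sum_congr rfl fun i _ => sum_congr rfl fun j _ => sum_comm
  have h₃ : ∑ i, ∑ j, ∑ k, ∑ l, a i k * a i l * (a j k * a j l) =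
      ∑ i, ∑ j, (a i ⬝ᵥ a j) ^ 2 := by
    simp_rw [dotProduct, sq, sum_mul_sum, mul_mul_mul_comm]
  simp only [minorIndicator, sum_add_distrib, sum_sub_distrib, h₁, h₂]
  simp only [← mul_sum, h₃]
  ring

end Indicator

section DoubleSums

variable {ι M : Type*} [Fintype ι] [AddCommMonoid M]

lemma sum_sum_eq_two_nsmul_sum_sum_ite_lt [LinearOrder ι] (g : ι → ι → M)
    (hg : ∀ i j, g j i = g i j) (hdiag : ∀ i, g i i = 0) :
    ∑ i, ∑ j, g i j = 2 • ∑ i, ∑ j, if i < j then g i j else 0 := by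
  have hsplit : ∀ i j, g i j = (if i < j then g i j else 0) + (if j < i then g j i else 0) := by
    intro i j
    rcases lt_trichotomy i j with h | rfl | h
    · simp [h, h.not_gt]
    · simp [hdiag]
    · simp [h, h.not_gt, hg]
  rw [two_nsmul]
  conv_lhs => rw [show g = _ from funext₂ hsplit]
  simp only [sum_add_distrib]
  rw [sum_comm (f := fun i j => if j < i then g j i else 0)]

lemma sum_sum_eq_sum_add_sum_offDiag [DecidableEq ι] (g : ι → ι → M) :
    ∑ i, ∑ j, g i j = ∑ i, g i i + ∑ p ∈ univ.offDiag, g p.1 p.2 := by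
  rw [← sum_product', ← diag_union_offDiag, sum_union (disjoint_diag_offDiag _), sum_diag]

end DoubleSums

lemma sq_sum_div_card_le_sum_sq {ι 𝕜 : Type*} [Field 𝕜] [LinearOrder 𝕜] [IsStrictOrderedRing 𝕜]
    (s : Finset ι) (f : ι → 𝕜) : (∑ i ∈ s, f i) ^ 2 / #s ≤ ∑ i ∈ s, f i ^ 2 :=
  div_le_of_le_mul₀ (Nat.cast_nonneg _) (sum_nonneg fun _ _ => sq_nonneg _)
    (mul_comm (#s : 𝕜) _ ▸ sq_sum_le_card_mul_sum_sq)

section Gram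

variable {ι κ : Type*} [Fintype ι] [Fintype κ]

lemma sum_sum_dotProduct {R : Type*} [CommSemiring R] (a : ι → κ → R) :
    ∑ i, ∑ j, (a i ⬝ᵥ a j) = ∑ k, (∑ i, a i k) ^ 2 := by
  simp_rw [dotProduct, sq, sum_mul_sum]
  exact (sum_comm.trans (sum_congr rfl fun _ _ => sum_comm)).symm

lemma dotProduct_self_of_isIdempotentElem {R : Type*} [Semiring R] {v : κ → R}
    (hv : ∀ k, IsIdempotentElem (v k)) : v ⬝ᵥ v = ∑ k, v k :=
  sum_congr rfl fun k _ => hv k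

variable {𝕜 : Type*} [Field 𝕜] [LinearOrder 𝕜] [IsStrictOrderedRing 𝕜]

theorem le_sum_sq_dotProduct {a : ι → κ → 𝕜} (ha : ∀ i k, IsIdempotentElem (a i k)) {c : 𝕜}
    (hc : ∑ i, ∑ k, a i k = c) (hcκ : Fintype.card κ ≤ c) :
    c ^ 2 / Fintype.card ι + (c ^ 2 / Fintype.card κ - c) ^ 2 /
      ((Fintype.card ι : 𝕜) ^ 2 - Fintype.card ι) ≤ ∑ i, ∑ j, (a i ⬝ᵥ a j) ^ 2 := by
  have hdiag i : a i ⬝ᵥ a i = ∑ k, a i k := dotProduct_self_of_isIdempotentElem (ha i)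
  have hrows : c ^ 2 / Fintype.card ι ≤ ∑ i, (a i ⬝ᵥ a i) ^ 2 := by
    simpa [hdiag, hc] using sq_sum_div_card_le_sum_sq univ fun i => ∑ k, a i k
  have hcols : c ^ 2 / Fintype.card κ ≤ ∑ i, ∑ j, (a i ⬝ᵥ a j) := by
    rw [sum_sum_dotProduct, ← hc, sum_comm]
    simpa using sq_sum_div_card_le_sum_sq univ fun k => ∑ i, a i k
  have hoff : ∑ p ∈ univ.offDiag, (a p.1 ⬝ᵥ a p.2) = ∑ i, ∑ j, (a i ⬝ᵥ a j) - c := by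
    rw [sum_sum_eq_sum_add_sum_offDiag, ← hc]
    simp [hdiag]
  have hc_le : c ≤ c ^ 2 / Fintype.card κ := by
    rcases (Fintype.card κ).eq_zero_or_pos with hκ | hκ
    · simp [← hc, Fintype.card_eq_zero_iff.mp hκ]
    · rw [le_div_iff₀ (by exact_mod_cast hκ), sq]
      exact mul_le_mul_of_nonneg_left hcκ ((Nat.cast_nonneg _).trans hcκ)
  have hoff_sq : (c ^ 2 / Fintype.card κ - c) ^ 2 ≤
      (∑ p ∈ univ.offDiag, (a p.1 ⬝ᵥ a p.2)) ^ 2 := by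
    rw [hoff]
    exact pow_le_pow_left₀ (sub_nonneg.mpr hc_le) (by linarith) 2
  have hcard : ((#(univ : Finset ι).offDiag : ℕ) : 𝕜) =
      (Fintype.card ι : 𝕜) ^ 2 - Fintype.card ι := by
    rw [offDiag_card, card_univ, Nat.cast_sub (Nat.le_mul_self _), Nat.cast_mul, sq]
  have hoff_le := sq_sum_div_card_le_sum_sq univ.offDiag fun p : ι × ι => a p.1 ⬝ᵥ a p.2
  rw [hcard] at hoff_le
  have hoff_div := div_le_div_of_nonneg_right hoff_sq (hcard ▸ Nat.cast_nonneg _)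
  rw [sum_sum_eq_sum_add_sum_offDiag fun i j => (a i ⬝ᵥ a j) ^ 2]
  linarith

end Gram

section ZModTwo

lemma val_zmod_two_eq_ite (x : ZMod 2) : x.val = if x = 1 then 1 else 0 := by
  fin_cases x <;> rfl

lemma isIdempotentElem_val_zmod_two {R : Type*} [Semiring R] (x : ZMod 2) :
    IsIdempotentElem (x.val : R) := by
  rw [val_zmod_two_eq_ite]; split_ifs <;> simp [IsIdempotentElem]

def indicatorMatrix {m n : Type*} (M : Matrix m n (ZMod 2)) : Matrix m n ℝ :=
  M.map fun x => (x.val : ℝ)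

lemma isIdempotentElem_indicatorMatrix {m n : Type*} (M : Matrix m n (ZMod 2)) (i : m) (k : n) :
    IsIdempotentElem (indicatorMatrix M i k) :=
  isIdempotentElem_val_zmod_two _

lemma sum_indicatorMatrix {m n : Type*} [Fintype m] [Fintype n] (M : Matrix m n (ZMod 2)) :
    ∑ i, ∑ k, indicatorMatrix M i k = #{q : m × n | M q.1 q.2 = 1} := by
  simp only [indicatorMatrix, card_filter, Nat.cast_sum, Fintype.sum_prod_type, map_apply,
    val_zmod_two_eq_ite]

variable {s : ℕ} (M : Matrix (Fin s) (Fin s) (ZMod 2))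

lemma ite_isUnit_sub2 (i j k l : Fin s) :
    (if IsUnit (sub2 M i j k l) then 1 else 0 : ℝ) =
      minorIndicator (indicatorMatrix M) i j k l := by
  simp only [sub2, minorIndicator, indicatorMatrix, map_apply, isUnit_iff_isUnit_det,
    det_fin_two_of, isUnit_iff_ne_zero]
  generalize M i k = x, M i l = y, M j k = z, M j l = w
  fin_cases x <;> fin_cases y <;> fin_cases z <;> fin_cases w <;> norm_num [ZMod.val] <;> decide

lemma four_mul_N2 :
    4 * (N2 M : ℝ) = ∑ i, ∑ j, ∑ k, ∑ l, minorIndicator (indicatorMatrix M) i j k l := by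
  have hA := isIdempotentElem_indicatorMatrix M
  set G : Fin s → Fin s → ℝ := fun i j =>
    ∑ k, ∑ l, if k < l then minorIndicator (indicatorMatrix M) i j k l else 0
  have hN2 : (N2 M : ℝ) = ∑ i, ∑ j, if i < j then G i j else 0 := by
    simp only [N2, card_filter, Nat.cast_sum, Fintype.sum_prod_type, ite_and, Nat.cast_ite,
      Nat.cast_one, Nat.cast_zero, ite_isUnit_sub2]
    refine sum_congr rfl fun i _ => sum_congr rfl fun j _ => ?_
    split_ifs
    · rfl
    · simp
  have hcols i j : ∑ k, ∑ l, minorIndicator (indicatorMatrix M) i j k l = 2 • G i j :=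
    sum_sum_eq_two_nsmul_sum_sum_ite_lt _ (minorIndicator_swap_cols _ i j)
      (minorIndicator_self_cols hA i j)
  have hrows : ∑ i, ∑ j, G i j = 2 • ∑ i, ∑ j, if i < j then G i j else 0 :=
    sum_sum_eq_two_nsmul_sum_sum_ite_lt G
      (fun i j => by simp only [G, minorIndicator_swap_rows (indicatorMatrix M) i j])
      (fun i => by simp [G, minorIndicator_self_rows hA])
  calc 4 * (N2 M : ℝ) = 2 • 2 • ∑ i, ∑ j, if i < j then G i j else 0 := by
        rw [hN2, smul_smul, nsmul_eq_mul]; norm_num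
    _ = 2 • ∑ i, ∑ j, G i j := by rw [hrows]
    _ = _ := by simp only [hcols, smul_sum]

end ZModTwo

theorem N2_upper_bound_general (s : ℕ) (hs : 2 ≤ s) (M : Matrix (Fin s) (Fin s) (ZMod 2)) (c : ℕ)
    (hc : c = (Finset.univ.filter (fun q : Fin s × Fin s => M q.1 q.2 = 1)).card)
    (hcl : s ≤ c) :
    (N2 M : ℝ) ≤ (s.choose 2 : ℝ) *
      ((c : ℝ) ^ 2 / (s : ℝ) ^ 2 -
        (c : ℝ) ^ 2 * ((c : ℝ) - (s : ℝ)) ^ 2 / ((s : ℝ) ^ 4 * ((s : ℝ) - 1) ^ 2)) := by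
  have hsum : ∑ i, ∑ k, indicatorMatrix M i k = c := by rw [sum_indicatorMatrix, hc]
  have hN2 : (N2 M : ℝ) =
      (c ^ 2 - ∑ i, ∑ j, (indicatorMatrix M i ⬝ᵥ indicatorMatrix M j) ^ 2) / 2 := by
    have h := four_mul_N2 M
    rw [sum_minorIndicator (indicatorMatrix M), hsum] at h
    linarith
  have hD := le_sum_sq_dotProduct (isIdempotentElem_indicatorMatrix M) hsum (by simpa using hcl)
  simp only [Fintype.card_fin] at hD
  have hs_real : (2 : ℝ) ≤ s := by exact_mod_cast hs
  rw [hN2, Nat.cast_choose_two]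
  calc _ ≤ ((c : ℝ) ^ 2 - (c ^ 2 / s + (c ^ 2 / s - c) ^ 2 / ((s : ℝ) ^ 2 - s))) / 2 := by
        linarith
    _ = _ := by
      have hs₁ : (s : ℝ) - 1 ≠ 0 := by linarith
      field_simp
      ring

theorem N2_upper_bound (s : ℕ) (hs : 2 ≤ s) (M : Matrix (Fin s) (Fin s) (ZMod 2)) (c : ℕ)
    (hc : c = (Finset.univ.filter (fun q : Fin s × Fin s => M q.1 q.2 = 1)).card)
    (hcl : s ≤ c) (hcu : c ≤ s ^ 2) :
    (N2 M : ℝ) ≤ (s.choose 2 : ℝ) *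
      ((c : ℝ) ^ 2 / (s : ℝ) ^ 2 -
        (c : ℝ) ^ 2 * ((c : ℝ) - (s : ℝ)) ^ 2 / ((s : ℝ) ^ 4 * ((s : ℝ) - 1) ^ 2)) :=
  N2_upper_bound_general s hs M c hc hcl
end
end
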